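/- arXiv:1512.03901 — 4 statements merged into one kernel-verified Lean document; each statement's English description precedes it below -/
import Mathlib

section
/- (Proposition 2.) The vanishing ideal I(π(L_X ∩ {J = 0})) ⊆ ℂ[u_0,…,u_n] is a homogeneous ideal with respect to the standard grading by total degree; that is, for every polynomial D vanishing identically on π(L_X ∩ {J = 0}), every homogeneous component of D also vanishes identically on π(L_X ∩ {J = 0}). Consequently the Zariski closure of π(L_X ∩ {J = 0}), with the origin removed, is (the affine cone over) a projective variety in ℙ^n. -/
open MvPolynomial

noncomputable section

/-- The Lagrange likelihood correspondence `L_X`. -/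
def LagrangeLX (n k s : ℕ) (h : Fin k → MvPolynomial (Fin (n + 1)) ℚ)
    (g : Fin s → MvPolynomial (Fin (n + 1)) ℚ) :
    Set ((Fin (n + 1) → ℂ) × (Fin (n + 1) → ℂ) × (Fin (k + 1) → ℂ)) :=
  {w | (∀ i : Fin (n + 1),
        w.2.1 i * (w.2.2 0 + ∑ j : Fin k, aeval w.2.1 (pderiv i (h j)) * w.2.2 j.succ)
          = w.1 i) ∧
      (∀ j : Fin s, aeval w.2.1 (g j) = 0) ∧
      (∑ i : Fin (n + 1), w.2.1 i) = 1}

/-- The Lagrange likelihood equation `F_i` (for `0 ≤ i ≤ n`) as a polynomial in the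
variables `p` (indexed by `Sum.inl`) and `Λ` (indexed by `Sum.inr`). -/
def lagF (n k : ℕ) (h : Fin k → MvPolynomial (Fin (n + 1)) ℚ) (u : Fin (n + 1) → ℂ)
    (i : Fin (n + 1)) : MvPolynomial (Fin (n + 1) ⊕ Fin (k + 1)) ℂ :=
  X (Sum.inl i) *
      (X (Sum.inr 0) + ∑ m : Fin k,
        rename Sum.inl (map (algebraMap ℚ ℂ) (pderiv i (h m))) * X (Sum.inr m.succ)) -
    C (u i)

/-- The `(n+k+2) × (n+k+2)` Jacobian-type determinant `J`, as a polynomial in the variables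
`p, Λ`: the rows are the gradients of `F_0, …, F_n` with respect to `(p, Λ)`, then the row
`(1, …, 1, 0, …, 0)`, then the gradients of `h_1, …, h_k`. -/
def lagJ (n k : ℕ) (h : Fin k → MvPolynomial (Fin (n + 1)) ℚ) (u : Fin (n + 1) → ℂ) :
    MvPolynomial (Fin (n + 1) ⊕ Fin (k + 1)) ℂ :=
  Matrix.det (Matrix.of fun r c : Fin (n + 1) ⊕ Fin (k + 1) =>
    match r with
    | Sum.inl i => pderiv c (lagF n k h u i)
    | Sum.inr t =>
        if ht : t = 0 then
          Sum.elim (fun _ => (1 : MvPolynomial (Fin (n + 1) ⊕ Fin (k + 1)) ℂ)) (fun _ => 0) c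
        else pderiv c (rename Sum.inl (map (algebraMap ℚ ℂ) (h (t.pred ht)))))

namespace Prop2Aux

variable {n k : ℕ}

lemma eval_rename_inl (p : Fin (n+1) → ℂ) (Λ : Fin (k+1) → ℂ)
    (Q : MvPolynomial (Fin (n+1)) ℂ) :
    eval (Sum.elim p Λ) (rename Sum.inl Q) = eval p Q := by
  rw [eval_rename]; rfl

lemma pderiv_inr_rename (m : Fin (k+1)) (Q : MvPolynomial (Fin (n+1)) ℂ) :
    pderiv (Sum.inr m : Fin (n+1) ⊕ Fin (k+1)) (rename Sum.inl Q) = 0 := by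
  apply pderiv_eq_zero_of_notMem_vars
  intro hmem
  obtain ⟨i, -, hi⟩ := Finset.mem_image.mp (vars_rename _ _ hmem)
  exact Sum.inl_ne_inr hi

lemma eval_pderiv_inl_lagF (h : Fin k → MvPolynomial (Fin (n+1)) ℚ) (u p : Fin (n+1) → ℂ)
    (Λ : Fin (k+1) → ℂ) (i j : Fin (n+1)) :
    eval (Sum.elim p Λ) (pderiv (Sum.inl j) (lagF n k h u i)) =
      (if j = i then 1 else 0) * (Λ 0 + ∑ m : Fin k,
          eval p (map (algebraMap ℚ ℂ) (pderiv i (h m))) * Λ m.succ)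
        + p i * ∑ m : Fin k,
            eval p (map (algebraMap ℚ ℂ) (pderiv j (pderiv i (h m)))) * Λ m.succ := by
  simp only [lagF, map_sub, pderiv_C, sub_zero, pderiv_mul, map_add, map_sum,
    pderiv_rename Sum.inl_injective, pderiv_map,
    pderiv_X_of_ne (Sum.inr_ne_inl (a := (0 : Fin (k+1)))),
    eval_rename_inl]
  simp [pderiv_X, Pi.single_apply, eval_rename_inl, apply_ite, eq_comm]

lemma eval_pderiv_inr_lagF (h : Fin k → MvPolynomial (Fin (n+1)) ℚ) (u p : Fin (n+1) → ℂ)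
    (Λ : Fin (k+1) → ℂ) (i : Fin (n+1)) (m : Fin (k+1)) :
    eval (Sum.elim p Λ) (pderiv (Sum.inr m) (lagF n k h u i)) =
      p i * ((if m = 0 then 1 else 0) + ∑ m' : Fin k,
        eval p (map (algebraMap ℚ ℂ) (pderiv i (h m'))) * (if m = m'.succ then 1 else 0)) := by
  simp only [lagF, map_sub, pderiv_C, sub_zero, pderiv_mul, map_add, map_sum,
    pderiv_inr_rename, pderiv_X, eval_rename_inl, zero_mul, mul_zero, add_zero, zero_add]
  simp [Pi.single_apply, eval_rename_inl, apply_ite, eq_comm]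

lemma sum_mul_scale (f : Fin k → ℂ) (Λ : Fin (k+1) → ℂ) (t : ℂ) :
    ∑ m : Fin k, f m * (t * Λ m.succ) = t * ∑ m : Fin k, f m * Λ m.succ := by
  rw [Finset.mul_sum]; exact Finset.sum_congr rfl fun m _ => by ring

/-- `lagJ` does not actually depend on `u`. -/
lemma lagJ_indep (h : Fin k → MvPolynomial (Fin (n+1)) ℚ) (u u' : Fin (n+1) → ℂ) :
    lagJ n k h u = lagJ n k h u' := by
  unfold lagJ
  congr 1
  ext r c
  cases r with
  | inl i => simp [lagF, map_sub, pderiv_C]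
  | inr s' => rfl

lemma lagJ_eval_scale (h : Fin k → MvPolynomial (Fin (n+1)) ℚ) (u p : Fin (n+1) → ℂ)
    (Λ : Fin (k+1) → ℂ) (t : ℂ) :
    t ^ (k+1) * eval (Sum.elim p fun m => t * Λ m) (lagJ n k h u)
      = t ^ (n+1) * eval (Sum.elim p Λ) (lagJ n k h u) := by
  unfold lagJ
  rw [RingHom.map_det, RingHom.map_det]
  have hL : (t ^ (k+1) : ℂ) = ∏ r : Fin (n+1) ⊕ Fin (k+1),
      Sum.elim (fun _ => (1:ℂ)) (fun _ => t) r := by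
    simp [Fintype.prod_sum_type]
  have hR : (t ^ (n+1) : ℂ) = ∏ c : Fin (n+1) ⊕ Fin (k+1),
      Sum.elim (fun _ => (t:ℂ)) (fun _ => 1) c := by
    simp [Fintype.prod_sum_type]
  rw [hL, hR, ← Matrix.det_mul_column, ← Matrix.det_mul_row]
  congr 1
  ext r c
  simp only [RingHom.mapMatrix_apply, Matrix.map_apply, Matrix.of_apply]
  cases r with
  | inl i =>
    cases c with
    | inl j =>
      simp only [Sum.elim_inl, Sum.elim_inr, one_mul]
      rw [eval_pderiv_inl_lagF, eval_pderiv_inl_lagF, sum_mul_scale, sum_mul_scale]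
      ring
    | inr m =>
      simp only [Sum.elim_inl, Sum.elim_inr, one_mul]
      rw [eval_pderiv_inr_lagF, eval_pderiv_inr_lagF]
  | inr s' =>
    rcases eq_or_ne s' 0 with rfl | hs'
    · cases c <;> simp
    · simp only [dif_neg hs']
      cases c with
      | inl j =>
        rw [pderiv_rename Sum.inl_injective, eval_rename_inl, eval_rename_inl]
        simp [mul_comm]
      | inr m =>
        simp [pderiv_inr_rename]

/-- Evaluating a homogeneous component at a scaled point. -/
lemma eval_homogeneousComponent_scale (Q : MvPolynomial (Fin (n+1)) ℂ) (d : ℕ)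
    (t : ℂ) (a : Fin (n+1) → ℂ) :
    eval (fun i => t * a i) (homogeneousComponent d Q)
      = t ^ d * eval a (homogeneousComponent d Q) := by
  have hQ := homogeneousComponent_isHomogeneous d Q
  rw [eval_eq, eval_eq, Finset.mul_sum]
  apply Finset.sum_congr rfl
  intro m hm
  have hdeg : ∑ i ∈ m.support, m i = d := by
    have := hQ (mem_support_iff.mp hm)
    simpa [Finsupp.weight_apply, Finsupp.sum] using this
  calc (homogeneousComponent d Q).coeff m * ∏ i ∈ m.support, (t * a i) ^ m i
      = (homogeneousComponent d Q).coeff m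
          * ((∏ i ∈ m.support, t ^ m i) * ∏ i ∈ m.support, a i ^ m i) := by
        rw [← Finset.prod_mul_distrib]; simp [mul_pow]
    _ = t ^ d * ((homogeneousComponent d Q).coeff m * ∏ i ∈ m.support, a i ^ m i) := by
        rw [Finset.prod_pow_eq_pow_sum, hdeg]; ring

end Prop2Aux

open Prop2Aux in
open Prop2Aux in
/-- Proposition 2: the vanishing ideal of `π(L_X ∩ {J = 0})` is a homogeneous ideal:
every homogeneous component of a polynomial vanishing on `π(L_X ∩ {J = 0})` also
vanishes on `π(L_X ∩ {J = 0})`. -/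
theorem proposition2 (n k s : ℕ) (hn : 1 ≤ n) (hk : 1 ≤ k) (hs : 1 ≤ s)
    (h : Fin k → MvPolynomial (Fin (n + 1)) ℚ) (g : Fin s → MvPolynomial (Fin (n + 1)) ℚ) :
    ∀ D : MvPolynomial (Fin (n + 1)) ℂ,
      (∀ a ∈ Prod.fst ''
          {w ∈ LagrangeLX n k s h g | eval (Sum.elim w.2.1 w.2.2) (lagJ n k h w.1) = 0},
        eval a D = 0) →
      ∀ d : ℕ, ∀ a ∈ Prod.fst ''
          {w ∈ LagrangeLX n k s h g | eval (Sum.elim w.2.1 w.2.2) (lagJ n k h w.1) = 0},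
        eval a (homogeneousComponent d D) = 0 := by
  intro D hD d a ha
  obtain ⟨w, hw, rfl⟩ := ha
  obtain ⟨⟨hF, hg, hsum⟩, hJ⟩ := hw
  -- scaling invariance of the set
  have hscale : ∀ t : ℂ, t ≠ 0 →
      ((fun i => t * w.1 i, w.2.1, fun m => t * w.2.2 m) :
          (Fin (n+1) → ℂ) × (Fin (n+1) → ℂ) × (Fin (k+1) → ℂ)) ∈
        {w ∈ LagrangeLX n k s h g | eval (Sum.elim w.2.1 w.2.2) (lagJ n k h w.1) = 0} := by
    intro t ht
    refine ⟨⟨fun i => ?_, fun j => hg j, hsum⟩, ?_⟩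
    · show w.2.1 i * (t * w.2.2 0 + ∑ j : Fin k,
          aeval w.2.1 (pderiv i (h j)) * (t * w.2.2 j.succ)) = t * w.1 i
      rw [sum_mul_scale (fun j => aeval w.2.1 (pderiv i (h j)))]
      have := hF i
      linear_combination t * this
    · show eval (Sum.elim w.2.1 fun m => t * w.2.2 m) (lagJ n k h fun i => t * w.1 i) = 0
      rw [lagJ_indep h _ w.1]
      have hkey := lagJ_eval_scale h w.1 w.2.1 w.2.2 t
      rw [hJ, mul_zero] at hkey
      have htk : (t : ℂ) ^ (k+1) ≠ 0 := pow_ne_zero _ ht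
      exact (mul_eq_zero.mp hkey).resolve_left htk
  have hvanish : ∀ t : ℂ, t ≠ 0 → eval (fun i => t * w.1 i) D = 0 := by
    intro t ht
    exact hD _ ⟨_, hscale t ht, rfl⟩
  -- polynomial in t
  set N := D.totalDegree with hN
  set P : Polynomial ℂ := ∑ j ∈ Finset.range (N+1),
      Polynomial.C (eval w.1 (homogeneousComponent j D)) * Polynomial.X ^ j with hP
  have hPeval : ∀ t : ℂ, P.eval t = eval (fun i => t * w.1 i) D := by
    intro t
    conv_rhs => rw [← sum_homogeneousComponent D]
    rw [map_sum]
    rw [hP, Polynomial.eval_finset_sum]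
    refine Finset.sum_congr rfl fun j _ => ?_
    rw [eval_homogeneousComponent_scale, Polynomial.eval_mul, Polynomial.eval_C,
      Polynomial.eval_pow, Polynomial.eval_X, mul_comm]
  have hPX : P * Polynomial.X = 0 := by
    apply Polynomial.funext
    intro t
    rcases eq_or_ne t 0 with rfl | ht
    · simp
    · rw [Polynomial.eval_mul, Polynomial.eval_X, hPeval, hvanish t ht, zero_mul,
        Polynomial.eval_zero]
  have hP0 : P = 0 := (mul_eq_zero.mp hPX).resolve_right Polynomial.X_ne_zero
  by_cases hd : d ≤ N
  · have hcoeff : P.coeff d = eval w.1 (homogeneousComponent d D) := by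
      rw [hP, Polynomial.finset_sum_coeff]
      simp only [Polynomial.coeff_C_mul, Polynomial.coeff_X_pow]
      rw [Finset.sum_eq_single d]
      · simp
      · intro j _ hj; simp [Ne.symm hj]
      · intro hmem; exact absurd (Finset.mem_range.mpr (Nat.lt_succ_of_le hd)) hmem
    rw [← hcoeff, hP0, Polynomial.coeff_zero]
  · rw [homogeneousComponent_eq_zero _ _ (lt_of_not_ge hd)]
    simp

end
end

section
/- (Fact F1.) For every u ∈ π(L_X ∩ {J = 0}) and every scalar α ∈ ℂ, the scalar multiple αu also lies in π(L_X ∩ {J = 0}). Explicitly: if there exist (p,Λ) ∈ ℂ^{n+1} × ℂ^{k+1} with F_0(u,p,Λ) = ⋯ = F_{n+s+1}(u,p,Λ) = 0 and J(p,Λ) = 0, then there exist (p',Λ') ∈ ℂ^{n+1} × ℂ^{k+1} with F_0(αu,p',Λ') = ⋯ = F_{n+s+1}(αu,p',Λ') = 0 and J(p',Λ') = 0. -/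
open MvPolynomial

noncomputable section

namespace FactF1Aux

variable {n k : ℕ}

lemma pderiv_inr_rename_inl (q : MvPolynomial (Fin (n + 1)) ℂ) (m : Fin (k + 1)) :
    pderiv (Sum.inr m : Fin (n + 1) ⊕ Fin (k + 1)) (rename Sum.inl q) = 0 := by
  induction q using MvPolynomial.induction_on with
  | C a => simp
  | add p q hp hq => simp [hp, hq]
  | mul_X p i hp => simp [pderiv_mul, hp]

lemma entry_inl (h : Fin k → MvPolynomial (Fin (n+1)) ℚ) (u : Fin (n+1) → ℂ)
    (p : Fin (n+1) → ℂ) (Λ : Fin (k+1) → ℂ) (t : ℂ) (i j : Fin (n+1)) :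
    eval (Sum.elim p fun m => t * Λ m) (pderiv (Sum.inl j) (lagF n k h u i))
      = t * eval (Sum.elim p Λ) (pderiv (Sum.inl j) (lagF n k h u i)) := by
  have hsum : ∀ (v : Fin k → ℂ), ∑ m, v m * (t * Λ m.succ) = t * ∑ m, v m * Λ m.succ := by
    intro v; rw [Finset.mul_sum]; exact Finset.sum_congr rfl fun m _ => by ring
  simp only [lagF, map_sub, pderiv_C, sub_zero, pderiv_mul, map_add, map_sum,
    pderiv_X, pderiv_rename Sum.inl_injective, pderiv_map,
    eval_mul, eval_add, map_sum, eval_X, eval_rename, Sum.elim_inl, Sum.elim_inr,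
    Sum.elim_comp_inl, Pi.single_apply, Sum.inl.injEq,
    reduceCtorEq, if_false, map_one, map_zero, add_zero, mul_zero, apply_ite
      (eval (Sum.elim p fun m => t * Λ m)), apply_ite (eval (Sum.elim p Λ))]
  rw [hsum, hsum]
  by_cases hij : i = j <;> simp only [hij, if_true, if_false, map_one, map_zero] <;> ring

lemma entry_inr (h : Fin k → MvPolynomial (Fin (n+1)) ℚ) (u : Fin (n+1) → ℂ)
    (p : Fin (n+1) → ℂ) (v v' : Fin (k+1) → ℂ) (i : Fin (n+1)) (m : Fin (k+1)) :
    eval (Sum.elim p v) (pderiv (Sum.inr m) (lagF n k h u i))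
      = eval (Sum.elim p v') (pderiv (Sum.inr m) (lagF n k h u i)) := by
  simp only [lagF, map_sub, pderiv_C, sub_zero, pderiv_mul, map_add, map_sum,
    pderiv_X, pderiv_inr_rename_inl,
    eval_mul, eval_add, map_sum, eval_X, eval_rename, Sum.elim_inl, Sum.elim_inr,
    Sum.elim_comp_inl, Pi.single_apply, Sum.inr.injEq,
    reduceCtorEq, if_false, map_one, map_zero, add_zero, zero_add, zero_mul, mul_zero,
    apply_ite (eval (Sum.elim p v)), apply_ite (eval (Sum.elim p v'))]

lemma lagJ_indep (h : Fin k → MvPolynomial (Fin (n+1)) ℚ) (u u' : Fin (n+1) → ℂ) :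
    lagJ n k h u' = lagJ n k h u := by
  unfold lagJ
  congr 1
  funext r c
  cases r with
  | inl i => simp [lagF, map_sub]
  | inr t => rfl

lemma scale (h : Fin k → MvPolynomial (Fin (n+1)) ℚ) (u : Fin (n+1) → ℂ)
    (p : Fin (n+1) → ℂ) (Λ : Fin (k+1) → ℂ) (t : ℂ) :
    t ^ (k+1) * eval (Sum.elim p fun m => t * Λ m) (lagJ n k h u)
      = t ^ (n+1) * eval (Sum.elim p Λ) (lagJ n k h u) := by
  classical
  unfold lagJ
  rw [RingHom.map_det, RingHom.map_det]
  have hcol : (∏ x : Fin (n+1) ⊕ Fin (k+1),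
      Sum.elim (fun _ : Fin (n+1) => (1:ℂ)) (fun _ : Fin (k+1) => t) x) = t ^ (k+1) := by
    rw [Fintype.prod_sum_type]; simp
  have hrow : (∏ x : Fin (n+1) ⊕ Fin (k+1),
      Sum.elim (fun _ : Fin (n+1) => t) (fun _ : Fin (k+1) => (1:ℂ)) x) = t ^ (n+1) := by
    rw [Fintype.prod_sum_type]; simp
  rw [← hcol, ← Matrix.det_mul_row, ← hrow, ← Matrix.det_mul_column]
  congr 1
  funext r c
  simp only [RingHom.mapMatrix_apply, Matrix.map_apply, Matrix.of_apply]
  cases r with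
  | inl i =>
    cases c with
    | inl j =>
      simpa using entry_inl h u p Λ t i j
    | inr m =>
      simpa using congrArg (t * ·) (entry_inr h u p (fun m => t * Λ m) Λ i m)
  | inr r0 =>
    by_cases hr : r0 = 0
    · subst hr
      cases c with
      | inl j => simp
      | inr m => simp
    · cases c with
      | inl j =>
        simp only [Sum.elim_inl, Sum.elim_inr, one_mul, dif_neg hr]
        rw [pderiv_rename Sum.inl_injective, eval_rename, eval_rename]
        simp
      | inr m =>
        simp [dif_neg hr, pderiv_inr_rename_inl]

end FactF1Aux

/-- Fact F1: the projection of `L_X ∩ {J = 0}` is closed under scalar multiplication. -/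
theorem factF1 (n k s : ℕ) (hn : 1 ≤ n) (hk : 1 ≤ k) (hs : 1 ≤ s)
    (h : Fin k → MvPolynomial (Fin (n + 1)) ℚ) (g : Fin s → MvPolynomial (Fin (n + 1)) ℚ)
    (u : Fin (n + 1) → ℂ) (α : ℂ)
    (p : Fin (n + 1) → ℂ) (Λ : Fin (k + 1) → ℂ)
    (hmem : (u, p, Λ) ∈ LagrangeLX n k s h g)
    (hJ : eval (Sum.elim p Λ) (lagJ n k h u) = 0) :
    ∃ (p' : Fin (n + 1) → ℂ) (Λ' : Fin (k + 1) → ℂ),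
      ((fun i => α * u i), p', Λ') ∈ LagrangeLX n k s h g ∧
      eval (Sum.elim p' Λ') (lagJ n k h (fun i => α * u i)) = 0 := by
  obtain ⟨h1, h2, h3⟩ := hmem
  refine ⟨p, fun m => α * Λ m, ⟨?_, h2, h3⟩, ?_⟩
  · intro i
    have hi := h1 i
    simp only at hi ⊢
    have hsum : ∑ j : Fin k, aeval p (pderiv i (h j)) * (α * Λ j.succ)
        = α * ∑ j : Fin k, aeval p (pderiv i (h j)) * Λ j.succ := by
      rw [Finset.mul_sum]; exact Finset.sum_congr rfl fun m _ => by ring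
    rw [hsum]
    linear_combination α * hi
  · rw [FactF1Aux.lagJ_indep h u (fun i => α * u i)]
    set J := lagJ n k h u with hJdef
    set Q : Polynomial ℂ := eval₂ (Polynomial.C : ℂ →+* Polynomial ℂ)
      (Sum.elim (fun i => Polynomial.C (p i)) (fun m => Polynomial.C (Λ m) * Polynomial.X)) J
      with hQdef
    have hQ : ∀ t : ℂ, Q.eval t = eval (Sum.elim p fun m => t * Λ m) J := by
      intro t
      have := eval₂_comp_left (Polynomial.evalRingHom t) (Polynomial.C : ℂ →+* Polynomial ℂ)
        (Sum.elim (fun i => Polynomial.C (p i)) (fun m => Polynomial.C (Λ m) * Polynomial.X)) J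
      have h1' : (Polynomial.evalRingHom t).comp (Polynomial.C : ℂ →+* Polynomial ℂ)
          = RingHom.id ℂ := by ext x; simp
      have h2' : (⇑(Polynomial.evalRingHom t)) ∘ (Sum.elim (fun i => Polynomial.C (p i))
          (fun m => Polynomial.C (Λ m) * Polynomial.X))
          = Sum.elim p fun m => t * Λ m := by
        funext x
        cases x <;>
          simp only [Function.comp_apply, Sum.elim_inl, Sum.elim_inr,
            Polynomial.coe_evalRingHom, Polynomial.eval_C, Polynomial.eval_mul,
            Polynomial.eval_X] <;> ring
      rw [h1', h2'] at this
      exact this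
    have key : ∀ t : ℂ, t ^ (k+1) * Q.eval t = 0 := by
      intro t
      rw [hQ t, FactF1Aux.scale h u p Λ t, hJ, mul_zero]
    have hXQ : (Polynomial.X : Polynomial ℂ) ^ (k+1) * Q = 0 := by
      apply Polynomial.funext
      intro r
      simpa using key r
    have hQ0 : Q = 0 := by
      rcases mul_eq_zero.mp hXQ with h' | h'
      · exact absurd h' (pow_ne_zero _ Polynomial.X_ne_zero)
      · exact h'
    have := hQ α
    rw [hQ0, Polynomial.eval_zero] at this
    exact this.symm

end
end

section
/- (Scaling invariance of the set of non-properness.) Let L_∞ be the set of non-properness of π restricted to L_X. For every α ∈ ℂ with α ≠ 0 and every u ∈ L_∞, the scalar multiple αu also lies in L_∞. -/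
open MvPolynomial

noncomputable section

/-- The Zariski closure of a subset of `ℂ^m`: the common zero set of its vanishing ideal. -/
def zariskiClosure {m : ℕ} (S : Set (Fin m → ℂ)) : Set (Fin m → ℂ) :=
  {u | ∀ D : MvPolynomial (Fin m) ℂ, (∀ a ∈ S, eval a D = 0) → eval u D = 0}

/-- The set of non-properness `L_∞` of the projection `π : L_X → ℂ^{n+1}`: the points `u`
of the Zariski closure of `π(L_X)` having no compact neighborhood `U` with
`π⁻¹(U) ∩ L_X` compact. -/
def nonProperness (n k s : ℕ) (h : Fin k → MvPolynomial (Fin (n + 1)) ℚ)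
    (g : Fin s → MvPolynomial (Fin (n + 1)) ℚ) : Set (Fin (n + 1) → ℂ) :=
  {u | u ∈ zariskiClosure (Prod.fst '' LagrangeLX n k s h g) ∧
    ¬ ∃ U : Set (Fin (n + 1) → ℂ), IsCompact U ∧ U ∈ nhds u ∧
      IsCompact (Prod.fst ⁻¹' U ∩ LagrangeLX n k s h g)}

lemma eval_bind₁' {m : ℕ} (x : Fin m → ℂ) (f : Fin m → MvPolynomial (Fin m) ℂ)
    (D : MvPolynomial (Fin m) ℂ) :
    eval x (bind₁ f D) = eval (fun i => eval x (f i)) D := by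
  induction D using MvPolynomial.induction_on with
  | C a => simp
  | add p q hp hq => simp [hp, hq]
  | mul_X p i hp => simp [hp]

/-- Scaling invariance of the set of non-properness: for `α ≠ 0`, if `u ∈ L_∞`
then `αu ∈ L_∞`. -/
theorem scaling_invariance_of_nonProperness (n k s : ℕ) (hn : 1 ≤ n) (hk : 1 ≤ k) (hs : 1 ≤ s)
    (h : Fin k → MvPolynomial (Fin (n + 1)) ℚ) (g : Fin s → MvPolynomial (Fin (n + 1)) ℚ)
    (α : ℂ) (hα : α ≠ 0) (u : Fin (n + 1) → ℂ)
    (hu : u ∈ nonProperness n k s h g) :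
    (fun i => α * u i) ∈ nonProperness n k s h g := by
  obtain ⟨hz, hnp⟩ := hu
  -- scaling maps L_X to itself
  have key : ∀ (β : ℂ) (w : (Fin (n + 1) → ℂ) × (Fin (n + 1) → ℂ) × (Fin (k + 1) → ℂ)),
      w ∈ LagrangeLX n k s h g →
      ((fun i => β * w.1 i, w.2.1, fun j => β * w.2.2 j) :
        (Fin (n + 1) → ℂ) × (Fin (n + 1) → ℂ) × (Fin (k + 1) → ℂ)) ∈ LagrangeLX n k s h g := by
    rintro β w ⟨h1, h2, h3⟩
    refine ⟨fun i => ?_, h2, h3⟩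
    have hsum : ∑ j : Fin k, aeval w.2.1 (pderiv i (h j)) * (β * w.2.2 j.succ)
        = β * ∑ j : Fin k, aeval w.2.1 (pderiv i (h j)) * w.2.2 j.succ := by
      rw [Finset.mul_sum]
      exact Finset.sum_congr rfl (fun j _ => by ring)
    simp only
    rw [hsum, ← h1 i]
    ring
  constructor
  · -- Zariski closure part
    intro D hD
    have hD' : ∀ a ∈ Prod.fst '' LagrangeLX n k s h g,
        eval a (bind₁ (fun i : Fin (n + 1) => (C α : MvPolynomial (Fin (n + 1)) ℂ) * X i) D)
          = 0 := by
      rintro a ⟨w, hw, rfl⟩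
      rw [eval_bind₁']
      have := hD (fun i => α * w.1 i) ⟨_, key α w hw, rfl⟩
      simpa using this
    have := hz _ hD'
    rw [eval_bind₁'] at this
    simpa using this
  · -- non-properness part
    rintro ⟨U, hUc, hUn, hKc⟩
    apply hnp
    refine ⟨(fun x : Fin (n + 1) → ℂ => fun i => α * x i) ⁻¹' U, ?_, ?_, ?_⟩
    · -- compact: it is the image of U under multiplication by α⁻¹
      have himg : (fun x : Fin (n + 1) → ℂ => fun i => α * x i) ⁻¹' U
          = (fun x : Fin (n + 1) → ℂ => fun i => α⁻¹ * x i) '' U := by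
        ext x
        constructor
        · intro hx
          exact ⟨fun i => α * x i, hx, by funext i; field_simp⟩
        · rintro ⟨y, hy, rfl⟩
          simpa [Set.mem_preimage, ← mul_assoc, mul_inv_cancel₀ hα] using hy
      rw [himg]
      exact hUc.image (continuous_pi fun i => continuous_const.mul (continuous_apply i))
    · have hcont : Continuous (fun x : Fin (n + 1) → ℂ => fun i => α * x i) :=
        continuous_pi fun i => continuous_const.mul (continuous_apply i)
      exact hcont.continuousAt.preimage_mem_nhds (by simpa using hUn)
    · -- compact: image of the other intersection under scaling by α⁻¹
      have himg : Prod.fst ⁻¹' ((fun x : Fin (n + 1) → ℂ => fun i => α * x i) ⁻¹' U)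
            ∩ LagrangeLX n k s h g
          = (fun w : (Fin (n + 1) → ℂ) × (Fin (n + 1) → ℂ) × (Fin (k + 1) → ℂ) =>
              (fun i => α⁻¹ * w.1 i, w.2.1, fun j => α⁻¹ * w.2.2 j)) ''
            (Prod.fst ⁻¹' U ∩ LagrangeLX n k s h g) := by
        ext w
        constructor
        · rintro ⟨hw1, hw2⟩
          refine ⟨(fun i => α * w.1 i, w.2.1, fun j => α * w.2.2 j), ⟨hw1, key α w hw2⟩, ?_⟩
          ext <;> simp <;> field_simp
        · rintro ⟨v, ⟨hv1, hv2⟩, rfl⟩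
          refine ⟨?_, key α⁻¹ v hv2⟩
          simpa [Set.mem_preimage, ← mul_assoc, mul_inv_cancel₀ hα] using hv1
      rw [himg]
      refine hKc.image (Continuous.prodMk ?_ (Continuous.prodMk ?_ ?_))
      · exact continuous_pi fun i => continuous_const.mul ((continuous_apply i).comp continuous_fst)
      · exact continuous_fst.comp continuous_snd
      · exact continuous_pi fun j =>
          continuous_const.mul ((continuous_apply j).comp (continuous_snd.comp continuous_snd))

end
end

section
/- (The 3×3 zero-diagonal matrix model has ML degree 2.) Let g = p_{12}p_{23}p_{31} + p_{13}p_{21}p_{32} ∈ ℚ[p_{12},p_{13},p_{21},p_{23},p_{31},p_{32}] (the determinant of the zero-diagonal matrix [[0,p_{12},p_{13}],[p_{21},0,p_{23}],[p_{31},p_{32},0]]), and consider the polynomials F_{ij} = p_{ij}·(λ_1 + (∂g/∂p_{ij})·λ_2) − u_{ij} for the six index pairs (i,j) ∈ {(1,2),(1,3),(2,1),(2,3),(3,1),(3,2)}, together with F = g and F' = p_{12} + p_{13} + p_{21} + p_{23} + p_{31} + p_{32} − 1. There exists a nonzero polynomial H in the six variables u_{ij} such that for every u ∈ ℂ^6 with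 H(u) ≠ 0, the set of (p_{12},p_{13},p_{21},p_{23},p_{31},p_{32},λ_1,λ_2) ∈ ℂ^8 satisfying all eight equations has exactly 2 elements. -/
open MvPolynomial

noncomputable section

/-- The determinant of the 3×3 zero-diagonal matrix
`[[0, p₁₂, p₁₃], [p₂₁, 0, p₂₃], [p₃₁, p₃₂, 0]]`, namely
`p₁₂p₂₃p₃₁ + p₁₃p₂₁p₃₂`, in the variables `p₁₂, p₁₃, p₂₁, p₂₃, p₃₁, p₃₂`
(indices `0, 1, 2, 3, 4, 5`). -/
def zeroDiagG : MvPolynomial (Fin 6) ℂ :=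
  X 0 * X 3 * X 4 + X 1 * X 2 * X 5

/-!
Summing the six likelihood equations gives `λ₁ = S := Σ uᵢⱼ`. Put `a := p₁₂ p₂₃ p₃₁ λ₂`, which
equals `-p₁₃ p₂₁ p₃₂ λ₂` on `g = 0`; then each equation reads `S pᵢⱼ = uᵢⱼ ∓ a`. Since `g` is
homogeneous of degree 3, the constraint `g(p) = 0` becomes `g(u ∓ a) = 0`, and in this cubic in `a`
the `a³` terms cancel, leaving a quadratic. Conversely each root `a` gives back exactly one critical
point, provided `p₁₂ p₂₃ p₃₁ ≠ 0`, i.e. `a ∉ {u₁₂, u₂₃, u₃₁}`. So whenever `S`, the discriminant of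
the quadratic and its values at `u₁₂, u₂₃, u₃₁` are nonzero, there are exactly two critical points.
-/

theorem Set.ncard_setOf_quadratic_eq_zero {K : Type*} [Field K] [IsSepClosed K] [NeZero (2 : K)]
    {a b c : K} (ha : a ≠ 0) (hd : discrim a b c ≠ 0) :
    {x : K | a * (x * x) + b * x + c = 0}.ncard = 2 := by
  obtain ⟨s, hs⟩ := IsSepClosed.exists_eq_mul_self (discrim a b c)
  have hs0 : s ≠ 0 := by rintro rfl; exact hd (by simpa using hs)
  have hroots : {x : K | a * (x * x) + b * x + c = 0} = {(-b + s) / (2 * a), (-b - s) / (2 * a)} := by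
    ext x
    exact quadratic_eq_zero_iff ha hs x
  rw [hroots]
  refine Set.ncard_pair fun h => hs0 ?_
  have h2a : 2 * a ≠ 0 := mul_ne_zero two_ne_zero ha
  rw [div_left_inj' h2a] at h
  have h2s : 2 * s = 0 := by linear_combination h
  exact (mul_eq_zero.1 h2s).resolve_left two_ne_zero

namespace ZeroDiagonalModel

section Coefficients

variable {R : Type*} [CommRing R]

def sampleSize (u : Fin 6 → R) : R := u 0 + u 1 + u 2 + u 3 + u 4 + u 5

def critCoeffB (u : Fin 6 → R) : R :=
  u 1 * u 2 + u 1 * u 5 + u 2 * u 5 - (u 0 * u 3 + u 0 * u 4 + u 3 * u 4)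

def critCoeffC (u : Fin 6 → R) : R := u 0 * u 3 * u 4 + u 1 * u 2 * u 5

def critQuadratic (u : Fin 6 → R) (a : R) : R :=
  (u 0 - a) * (u 3 - a) * (u 4 - a) + (u 1 + a) * (u 2 + a) * (u 5 + a)

lemma critQuadratic_eq (u : Fin 6 → R) (a : R) :
    critQuadratic u a = sampleSize u * (a * a) + critCoeffB u * a + critCoeffC u := by
  unfold critQuadratic sampleSize critCoeffB critCoeffC
  ring

end Coefficients

def genericityPoly : MvPolynomial (Fin 6) ℂ :=
  sampleSize X * discrim (sampleSize X) (critCoeffB X) (critCoeffC X) *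
    critQuadratic X (X 0) * critQuadratic X (X 3) * critQuadratic X (X 4)

lemma eval_genericityPoly (u : Fin 6 → ℂ) :
    eval u genericityPoly = sampleSize u * discrim (sampleSize u) (critCoeffB u) (critCoeffC u) *
      critQuadratic u (u 0) * critQuadratic u (u 3) * critQuadratic u (u 4) := by
  simp [genericityPoly, sampleSize, critCoeffB, critCoeffC, critQuadratic, discrim]

lemma genericityPoly_ne_zero : genericityPoly ≠ 0 := by
  intro h
  have h1 := eval_genericityPoly fun _ => 1
  rw [h] at h1
  norm_num [sampleSize, critCoeffB, critCoeffC, critQuadratic, discrim] at h1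

def IsCritical (u : Fin 6 → ℂ) (x : (Fin 6 → ℂ) × (Fin 2 → ℂ)) : Prop :=
  (∀ i : Fin 6, x.1 i * (x.2 0 + eval x.1 (pderiv i zeroDiagG) * x.2 1) = u i) ∧
    eval x.1 zeroDiagG = 0 ∧
    x.1 0 + x.1 1 + x.1 2 + x.1 3 + x.1 4 + x.1 5 = 1

lemma eval_pderiv_zeroDiagG (p : Fin 6 → ℂ) (i : Fin 6) :
    eval p (pderiv i zeroDiagG) =
      ![p 3 * p 4, p 2 * p 5, p 1 * p 5, p 0 * p 4, p 0 * p 3, p 1 * p 2] i := by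
  fin_cases i <;> simp [zeroDiagG, mul_comm]

lemma isCritical_iff {u p : Fin 6 → ℂ} {L : Fin 2 → ℂ} :
    IsCritical u (p, L) ↔
      p 0 * (L 0 + p 3 * p 4 * L 1) = u 0 ∧ p 1 * (L 0 + p 2 * p 5 * L 1) = u 1 ∧
      p 2 * (L 0 + p 1 * p 5 * L 1) = u 2 ∧ p 3 * (L 0 + p 0 * p 4 * L 1) = u 3 ∧
      p 4 * (L 0 + p 0 * p 3 * L 1) = u 4 ∧ p 5 * (L 0 + p 1 * p 2 * L 1) = u 5 ∧
      p 0 * p 3 * p 4 + p 1 * p 2 * p 5 = 0 ∧ p 0 + p 1 + p 2 + p 3 + p 4 + p 5 = 1 := by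
  simp only [IsCritical, eval_pderiv_zeroDiagG, Fin.forall_fin_succ, IsEmpty.forall_iff]
  simp [zeroDiagG, and_assoc]

lemma eval_smul_zeroDiagG (c : ℂ) (p : Fin 6 → ℂ) :
    eval (c • p) zeroDiagG = c ^ 3 * eval p zeroDiagG := by
  simp only [zeroDiagG, map_add, map_mul, eval_X, Pi.smul_apply, smul_eq_mul]
  ring

def critShift (u : Fin 6 → ℂ) (a : ℂ) : Fin 6 → ℂ :=
  ![u 0 - a, u 1 + a, u 2 + a, u 3 - a, u 4 - a, u 5 + a]

lemma eval_critShift_zeroDiagG (u : Fin 6 → ℂ) (a : ℂ) :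
    eval (critShift u a) zeroDiagG = critQuadratic u a := by
  simp [critShift, zeroDiagG, critQuadratic]

lemma smul_eq_critShift_iff {u p : Fin 6 → ℂ} {c a : ℂ} :
    c • p = critShift u a ↔
      c * p 0 = u 0 - a ∧ c * p 1 = u 1 + a ∧ c * p 2 = u 2 + a ∧
      c * p 3 = u 3 - a ∧ c * p 4 = u 4 - a ∧ c * p 5 = u 5 + a := by
  simp [funext_iff, Fin.forall_fin_succ, critShift]

lemma mul_ne_zero_of_smul_eq_critShift {u p : Fin 6 → ℂ} {c a : ℂ} (h : c • p = critShift u a)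
    (hq : (u 0 - a) * (u 3 - a) * (u 4 - a) ≠ 0) : p 0 * p 3 * p 4 ≠ 0 := by
  obtain ⟨e0, -, -, e3, e4, -⟩ := smul_eq_critShift_iff.1 h
  rw [← e0, ← e3, ← e4] at hq
  intro hp
  exact hq (by linear_combination c ^ 3 * hp)

def candidate (u : Fin 6 → ℂ) (a : ℂ) : (Fin 6 → ℂ) × (Fin 2 → ℂ) :=
  let p := (sampleSize u)⁻¹ • critShift u a
  (p, ![sampleSize u, a / (p 0 * p 3 * p 4)])

lemma IsCritical.snd_zero_eq_sampleSize {u p : Fin 6 → ℂ} {L : Fin 2 → ℂ}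
    (h : IsCritical u (p, L)) : L 0 = sampleSize u := by
  obtain ⟨e0, e1, e2, e3, e4, e5, hg, hsum⟩ := isCritical_iff.1 h
  unfold sampleSize
  linear_combination e0 + e1 + e2 + e3 + e4 + e5 - L 0 * hsum - 3 * L 1 * hg

lemma IsCritical.smul_eq_critShift {u p : Fin 6 → ℂ} {L : Fin 2 → ℂ} (h : IsCritical u (p, L)) :
    sampleSize u • p = critShift u (p 0 * p 3 * p 4 * L 1) := by
  have hL0 := h.snd_zero_eq_sampleSize
  obtain ⟨e0, e1, e2, e3, e4, e5, hg, -⟩ := isCritical_iff.1 h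
  refine smul_eq_critShift_iff.2 ⟨?_, ?_, ?_, ?_, ?_, ?_⟩
  · linear_combination e0 - p 0 * hL0
  · linear_combination e1 - p 1 * hL0 - L 1 * hg
  · linear_combination e2 - p 2 * hL0 - L 1 * hg
  · linear_combination e3 - p 3 * hL0
  · linear_combination e4 - p 4 * hL0
  · linear_combination e5 - p 5 * hL0 - L 1 * hg

lemma IsCritical.critQuadratic_eq_zero {u p : Fin 6 → ℂ} {L : Fin 2 → ℂ}
    (h : IsCritical u (p, L)) : critQuadratic u (p 0 * p 3 * p 4 * L 1) = 0 := by
  rw [← eval_critShift_zeroDiagG, ← h.smul_eq_critShift, eval_smul_zeroDiagG, h.2.1, mul_zero]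

lemma IsCritical.eq_candidate {u p : Fin 6 → ℂ} {L : Fin 2 → ℂ} (h : IsCritical u (p, L))
    (hS : sampleSize u ≠ 0) (hp : p 0 * p 3 * p 4 ≠ 0) :
    (p, L) = candidate u (p 0 * p 3 * p 4 * L 1) := by
  have hp_eq : (sampleSize u)⁻¹ • critShift u (p 0 * p 3 * p 4 * L 1) = p := by
    rw [← h.smul_eq_critShift, inv_smul_smul₀ hS]
  refine Prod.ext hp_eq.symm ?_
  simp only [candidate, hp_eq, mul_div_cancel_left₀ _ hp]
  funext i
  fin_cases i
  · exact h.snd_zero_eq_sampleSize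
  · rfl

lemma isCritical_candidate {u : Fin 6 → ℂ} {a : ℂ} (hS : sampleSize u ≠ 0)
    (hroot : critQuadratic u a = 0) (hq : (u 0 - a) * (u 3 - a) * (u 4 - a) ≠ 0) :
    IsCritical u (candidate u a) := by
  set p := (sampleSize u)⁻¹ • critShift u a
  have hSp : sampleSize u • p = critShift u a := smul_inv_smul₀ hS _
  obtain ⟨e0, e1, e2, e3, e4, e5⟩ := smul_eq_critShift_iff.1 hSp
  have hg : eval p zeroDiagG = 0 := by
    have h := eval_smul_zeroDiagG (sampleSize u) p
    rw [hSp, eval_critShift_zeroDiagG, hroot, eq_comm, mul_eq_zero] at h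
    exact h.resolve_left (pow_ne_zero 3 hS)
  simp only [zeroDiagG, map_add, map_mul, eval_X] at hg
  have hp := mul_ne_zero_of_smul_eq_critShift hSp hq
  have hμ : p 0 * p 3 * p 4 * (a / (p 0 * p 3 * p 4)) = a := mul_div_cancel₀ a hp
  show IsCritical u (p, ![sampleSize u, a / (p 0 * p 3 * p 4)])
  generalize a / (p 0 * p 3 * p 4) = μ at hμ ⊢
  rw [isCritical_iff]
  simp only [Matrix.cons_val_zero, Matrix.cons_val_one]
  refine ⟨?_, ?_, ?_, ?_, ?_, ?_, hg, ?_⟩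
  · linear_combination e0 + hμ
  · linear_combination e1 - hμ + μ * hg
  · linear_combination e2 - hμ + μ * hg
  · linear_combination e3 + hμ
  · linear_combination e4 + hμ
  · linear_combination e5 - hμ + μ * hg
  · refine mul_left_cancel₀ hS ?_
    unfold sampleSize at *
    linear_combination e0 + e1 + e2 + e3 + e4 + e5

lemma candidate_injective {u : Fin 6 → ℂ} (hS : sampleSize u ≠ 0) :
    Function.Injective (candidate u) := by
  intro a b h
  have h0 := congr_fun (congr_arg Prod.fst h) 0
  simpa [candidate, critShift, hS] using h0

lemma setOf_isCritical_eq_image {u : Fin 6 → ℂ} (hS : sampleSize u ≠ 0)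
    (hq : ∀ a, critQuadratic u a = 0 → (u 0 - a) * (u 3 - a) * (u 4 - a) ≠ 0) :
    {x | IsCritical u x} = candidate u '' {a | critQuadratic u a = 0} := by
  ext ⟨p, L⟩
  constructor
  · intro h
    have hroot := h.critQuadratic_eq_zero
    have hp := mul_ne_zero_of_smul_eq_critShift h.smul_eq_critShift (hq _ hroot)
    exact ⟨_, hroot, (h.eq_candidate hS hp).symm⟩
  · rintro ⟨a, hroot, hx⟩
    exact hx ▸ isCritical_candidate hS hroot (hq a hroot)

end ZeroDiagonalModel

open ZeroDiagonalModel

/-- Here `x.1 = (p₁₂, p₁₃, p₂₁, p₂₃, p₃₁, p₃₂)` and `x.2 = (λ₁, λ₂)`. -/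
theorem zero_diagonal_matrix_model_ML_degree_two :
    ∃ H : MvPolynomial (Fin 6) ℂ, H ≠ 0 ∧
      ∀ u : Fin 6 → ℂ, eval u H ≠ 0 →
        {x : (Fin 6 → ℂ) × (Fin 2 → ℂ) |
            (∀ i : Fin 6, x.1 i * (x.2 0 + eval x.1 (pderiv i zeroDiagG) * x.2 1) = u i) ∧
            eval x.1 zeroDiagG = 0 ∧
            x.1 0 + x.1 1 + x.1 2 + x.1 3 + x.1 4 + x.1 5 = 1}.ncard = 2 := by
  refine ⟨genericityPoly, genericityPoly_ne_zero, fun u hu => ?_⟩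
  simp only [eval_genericityPoly, mul_ne_zero_iff] at hu
  obtain ⟨⟨⟨⟨hS, hdisc⟩, h0⟩, h3⟩, h4⟩ := hu
  have hq : ∀ a, critQuadratic u a = 0 → (u 0 - a) * (u 3 - a) * (u 4 - a) ≠ 0 := by
    intro a hroot
    have hne : ∀ j, critQuadratic u (u j) ≠ 0 → u j - a ≠ 0 := fun j hj =>
      sub_ne_zero.2 fun h => hj (h ▸ hroot)
    exact mul_ne_zero (mul_ne_zero (hne 0 h0) (hne 3 h3)) (hne 4 h4)
  change {x | IsCritical u x}.ncard = 2
  rw [setOf_isCritical_eq_image hS hq, Set.ncard_image_of_injective _ (candidate_injective hS)]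
  simp only [critQuadratic_eq]
  exact Set.ncard_setOf_quadratic_eq_zero hS hdisc

end
end
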